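/- arXiv:2410.10881 — 4 statements merged into one kernel-verified Lean document; each statement's English description precedes it below -/
import Mathlib

section
/- Let R be a commutative noetherian Jacobson ring and let H be an associative unital R-algebra (not necessarily commutative) such that the center Z of H is a finitely generated R-algebra and H is a finitely generated module over Z. Then every simple left H-module M is finitely generated as an R-module. -/
/-!
The center `Z` acts on the simple module `M` by `H`-linear maps, so every central
element either kills `M` or has image all of `M`. Since `M` is cyclic over `H`, it is finite
over `Z`, and Nakayama's lemma then shows that the annihilator `𝔪` of `M` in `Z` is a maximal
ideal. The field `Z ⧸ 𝔪` is a finitely generated algebra over the Jacobson ring `R`, hence finite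
over `R` (Zariski's lemma), and `M` is finite over `Z ⧸ 𝔪`.
-/

open Module

theorem IsSimpleModule.surjective_smul_of_mem_center {H M : Type*} [Ring H] [AddCommGroup M]
    [Module H M] [IsSimpleModule H M] {z : H} (hz : z ∈ Set.center H)
    (hzM : z ∉ annihilator H M) : Function.Surjective (z • · : M → M) := by
  have hrange : LinearMap.range (End.smulLeft z hz : End H M) ≠ ⊥ := by
    rw [Ne, LinearMap.range_eq_bot]
    exact fun h ↦ hzM (mem_annihilator.mpr fun m ↦ LinearMap.congr_fun h m)
  exact LinearMap.range_eq_top.mp ((eq_bot_or_eq_top _).resolve_left hrange)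

section Annihilator

variable {A M : Type*} [CommRing A] [AddCommGroup M] [Module A M]

theorem Module.isMaximal_annihilator_of_surjective_smul [Module.Finite A M] [Nontrivial M]
    (h : ∀ a ∉ annihilator A M, Function.Surjective (a • · : M → M)) :
    (annihilator A M).IsMaximal := by
  refine Ideal.isMaximal_iff.mpr ⟨fun h1 ↦ ?_, fun J a hJ ha haJ ↦ ?_⟩
  · obtain ⟨m, hm⟩ := exists_ne (0 : M)
    exact hm (by simpa using mem_annihilator.mp h1 m)
  · have hle : (⊤ : Submodule A M) ≤ Ideal.span {a} • ⊤ := fun m _ ↦ by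
      obtain ⟨m', rfl⟩ := h a ha m
      exact Submodule.smul_mem_smul (Ideal.mem_span_singleton_self a) trivial
    -- Nakayama: some `r ≡ 1 [mod a]` annihilates `M`.
    obtain ⟨r, hr1, hr⟩ := Submodule.exists_sub_one_mem_and_smul_eq_zero_of_fg_of_le_smul
      _ _ Module.Finite.fg_top hle
    have hrJ : r ∈ J := hJ (mem_annihilator.mpr fun m ↦ hr m trivial)
    have hr1J : r - 1 ∈ J := Ideal.span_le.mpr (Set.singleton_subset_iff.mpr haJ) hr1
    simpa using J.sub_mem hrJ hr1J

theorem Module.Finite.of_finite_quotient_annihilator (R : Type*) [CommRing R] [Algebra R A]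
    [Module R M] [IsScalarTower R A M] [Module.Finite A M]
    [Module.Finite R (A ⧸ annihilator A M)] : Module.Finite R M :=
  letI := Module.quotientAnnihilator (R := A) (M := M)
  haveI : Module.Finite (A ⧸ annihilator A M) M := .of_restrictScalars_finite A _ M
  .trans (A ⧸ annihilator A M) M

end Annihilator

theorem simple_module_finite_of_center_finiteType_general
    (R : Type*) [CommRing R] [IsJacobsonRing R]
    (H : Type*) [Ring H] [Algebra R H]
    (hZ : Algebra.FiniteType R (Subalgebra.center R H))
    (hH : Module.Finite (Subalgebra.center R H) H)
    (M : Type*) [AddCommGroup M] [Module H M] [Module R M] [IsScalarTower R H M]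
    [IsSimpleModule H M] :
    Module.Finite R M := by
  set Z := Subalgebra.center R H
  have : Module.Finite Z M := .trans H M
  have : Nontrivial M := IsSimpleModule.nontrivial H M
  have hmax : (annihilator Z M).IsMaximal :=
    isMaximal_annihilator_of_surjective_smul fun z hz ↦
      IsSimpleModule.surjective_smul_of_mem_center (H := H) (z := z) z.2 fun hzM ↦
        hz (mem_annihilator.mpr fun m ↦ mem_annihilator.mp hzM m)
  let := Ideal.Quotient.field (annihilator Z M)
  have : Algebra.FiniteType R (Z ⧸ annihilator Z M) :=
    .of_surjective (Ideal.Quotient.mkₐ R _) (Ideal.Quotient.mkₐ_surjective R _)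
  have := finite_of_finite_type_of_isJacobsonRing R (Z ⧸ annihilator Z M)
  exact .of_finite_quotient_annihilator R (A := Z)

/-- Let `R` be a commutative noetherian Jacobson ring and let `H` be an associative unital
`R`-algebra (not necessarily commutative) such that the center `Z` of `H` is a finitely
generated `R`-algebra and `H` is a finitely generated module over `Z`. Then every simple
left `H`-module `M` is finitely generated as an `R`-module. -/
theorem simple_module_finite_of_center_finiteType
    (R : Type*) [CommRing R] [IsNoetherianRing R] [IsJacobsonRing R]
    (H : Type*) [Ring H] [Algebra R H]
    (hZ : Algebra.FiniteType R (Subalgebra.center R H))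
    (hH : Module.Finite (Subalgebra.center R H) H)
    (M : Type*) [AddCommGroup M] [Module H M] [Module R M] [IsScalarTower R H M]
    [IsSimpleModule H M] :
    Module.Finite R M :=
  simple_module_finite_of_center_finiteType_general R H hZ hH M
end

section
/- Let H be an associative unital ring and let Z be a commutative noetherian subring of the center of H such that H is finitely generated as a Z-module. Let M be a simple left H-module. Then the quotient Z/Ann_Z(M), where Ann_Z(M) = {z ∈ Z : z·M = 0} is the annihilator of M in Z, is a field. -/
/-- Let `H` be an associative unital ring and let `Z` be a commutative noetherian subring of
the center of `H` (encoded as a commutative ring `Z` with an injective algebra structure map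
`Z →+* H`, whose image is automatically central) such that `H` is finitely generated as a
`Z`-module. Let `M` be a simple left `H`-module. Then the quotient `Z / Ann_Z(M)` of `Z` by
the annihilator of `M` in `Z` is a field. -/
theorem quotient_by_annihilator_isField
    (Z : Type*) [CommRing Z] [IsNoetherianRing Z]
    (H : Type*) [Ring H] [Algebra Z H]
    (hinj : Function.Injective (algebraMap Z H))
    [Module.Finite Z H]
    (M : Type*) [AddCommGroup M] [Module H M] [Module Z M] [IsScalarTower Z H M]
    [IsSimpleModule H M] :
    IsField (Z ⧸ Module.annihilator Z M) := by
  have hnt : Nontrivial M := IsSimpleModule.nontrivial H M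
  -- M is finitely generated over H (cyclic), hence over Z
  have hfinZ : Module.Finite Z M := Module.Finite.trans H M
  -- the annihilator is a proper ideal
  have hann_ne_top : Module.annihilator Z M ≠ ⊤ := by
    intro h
    obtain ⟨m, hm⟩ := exists_ne (0 : M)
    have h1 : (1 : Z) ∈ Module.annihilator Z M := h ▸ Submodule.mem_top
    have := Module.mem_annihilator.mp h1 m
    simp only [one_smul] at this
    exact hm this
  refine ⟨?_, mul_comm, ?_⟩
  · exact (Ideal.Quotient.nontrivial_iff.mpr hann_ne_top).exists_pair_ne
  · rintro a ha
    obtain ⟨z, rfl⟩ := Ideal.Quotient.mk_surjective a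
    have hz : z ∉ Module.annihilator Z M := fun h => ha (Ideal.Quotient.eq_zero_iff_mem.mpr h)
    -- scalar multiplication by `z` is an `H`-linear endomorphism of `M`
    let f : M →ₗ[H] M :=
      { toFun := fun m => z • m
        map_add' := fun x y => smul_add z x y
        map_smul' := fun h m => by
          simp only [RingHom.id_apply]
          rw [← algebraMap_smul H z m, ← algebraMap_smul H z (h • m), smul_smul, smul_smul,
            Algebra.commutes] }
    have hf : f ≠ 0 := by
      intro h
      apply hz
      rw [Module.mem_annihilator]
      intro m
      exact congrFun (congrArg DFunLike.coe h) m
    -- by (half of) Schur's lemma, `f` is surjective, i.e. `z • M = M`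
    have hsurj : Function.Surjective f := LinearMap.surjective_of_ne_zero hf
    -- Nakayama / determinant trick: `z M = M`, so `z` is invertible mod the annihilator
    have hle : (⊤ : Submodule Z M) ≤ Ideal.span {z} • ⊤ := by
      intro m _
      obtain ⟨m', hm'⟩ := hsurj m
      rw [show m = z • m' from hm'.symm]
      exact Submodule.smul_mem_smul (Ideal.subset_span rfl) Submodule.mem_top
    obtain ⟨r, hrI, hr⟩ := Submodule.exists_mem_and_smul_eq_self_of_fg_of_le_smul
      (Ideal.span {z}) ⊤ (Module.Finite.fg_top (R := Z) (M := M)) hle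
    obtain ⟨c, hc⟩ := Ideal.mem_span_singleton'.mp hrI
    refine ⟨Ideal.Quotient.mk _ c, ?_⟩
    have hmem : z * c - 1 ∈ Module.annihilator Z M := by
      rw [Module.mem_annihilator]
      intro m
      have hrm : r • m = m := hr m Submodule.mem_top
      rw [sub_smul, one_smul, mul_comm, hc, hrm, sub_self]
    calc Ideal.Quotient.mk _ z * Ideal.Quotient.mk _ c
        = Ideal.Quotient.mk _ (z * c) := (map_mul _ _ _).symm
      _ = 1 := by
          rw [← sub_eq_zero, ← map_one (Ideal.Quotient.mk (Module.annihilator Z M)), ← map_sub]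
          exact Ideal.Quotient.eq_zero_iff_mem.mpr hmem
end

section
/- Let R be a commutative ring with unity. If every finitely generated commutative R-algebra A which is a field is finitely generated as an R-module, then R is a Jacobson ring. -/
universe u

/-!
If `f ∉ I.radical`, then `f` stays non-nilpotent in `R ⧸ I`, so the localization of `R ⧸ I`
away from `f` is nonzero and has a residue field `K`. This `K` is a field of finite type over `R`
in which `I` dies and `f` becomes a unit. By hypothesis `K` is finite, hence integral, over `R`,
so the kernel of `R → K` is a maximal ideal containing `I` but not `f`. Thus every radical ideal
is an intersection of maximal ideals.
-/

theorem RingHom.ker_algebraMap_isMaximal_of_isIntegral (R K : Type*) [CommRing R] [Field K]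
    [Algebra R K] [Algebra.IsIntegral R K] : (RingHom.ker (algebraMap R K)).IsMaximal :=
  Ideal.isMaximal_comap_of_isIntegral_of_isMaximal (⊥ : Ideal K)

theorem exists_field_finiteType_of_notMem_radical {R : Type u} [CommRing R] {I : Ideal R} {f : R}
    (hf : f ∉ I.radical) :
    ∃ (K : Type u) (_ : Field K) (_ : Algebra R K), Algebra.FiniteType R K ∧
      I ≤ RingHom.ker (algebraMap R K) ∧ algebraMap R K f ≠ 0 := by
  set f' := Ideal.Quotient.mk I f
  let L := Localization.Away f'
  have : Nontrivial L := by
    rw [← not_subsingleton_iff_nontrivial, IsLocalization.subsingleton_iff (M := Submonoid.powers f')]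
    rintro ⟨n, hn⟩
    exact hf ⟨n, Ideal.Quotient.eq_zero_iff_mem.mp (by rw [map_pow]; exact hn)⟩
  obtain ⟨m, hm⟩ := Ideal.exists_maximal L
  let : Field (L ⧸ m) := Ideal.Quotient.field m
  have : Algebra.FiniteType R (R ⧸ I) :=
    .of_surjective (Ideal.Quotient.mkₐ R I) Ideal.Quotient.mk_surjective
  have : Algebra.FiniteType (R ⧸ I) L := IsLocalization.finiteType_of_monoid_fg (.powers f') L
  have : Algebra.FiniteType R L := .trans (S := R ⧸ I) ‹_› ‹_›
  refine ⟨L ⧸ m, inferInstance, inferInstance,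
    .of_surjective (Ideal.Quotient.mkₐ R m) Ideal.Quotient.mk_surjective, fun x hx => ?_, ?_⟩
  · rw [RingHom.mem_ker, IsScalarTower.algebraMap_apply R (R ⧸ I) (L ⧸ m),
      Ideal.Quotient.algebraMap_eq, Ideal.Quotient.eq_zero_iff_mem.mpr hx, map_zero]
  · rw [IsScalarTower.algebraMap_apply R (R ⧸ I) (L ⧸ m), IsScalarTower.algebraMap_apply _ L]
    exact ((IsLocalization.Away.algebraMap_isUnit f').map _).ne_zero

/-- Let `R` be a commutative ring. If every finitely generated commutative `R`-algebra `A`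
which is a field is finitely generated as an `R`-module, then `R` is a Jacobson ring. -/
theorem isJacobsonRing_of_finiteType_field_finite
    (R : Type u) [CommRing R]
    (h : ∀ (A : Type u) [CommRing A] [Algebra R A],
      Algebra.FiniteType R A → IsField A → Module.Finite R A) :
    IsJacobsonRing R := by
  rw [isJacobsonRing_iff]
  intro I hI
  refine le_antisymm (fun f hf => ?_) Ideal.le_jacobson
  by_contra hfI
  obtain ⟨K, _, _, hK, hIK, hfK⟩ := exists_field_finiteType_of_notMem_radical fun h' => hfI (hI h')
  have : Module.Finite R K := h K hK (Field.toIsField K)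
  have : Algebra.IsIntegral R K := .of_finite R K
  exact hfK (Ideal.mem_sInf.mp hf ⟨hIK, RingHom.ker_algebraMap_isMaximal_of_isIntegral R K⟩)
end

section
/- Let l be a prime, let ℤ_l denote the l-adic integers and ℚ_l the l-adic numbers, and let H = ℤ_l[T₀, T₀⁻¹, T₁] be the Laurent-polynomial-in-T₀, polynomial-in-T₁ algebra over ℤ_l. The ℤ_l-algebra homomorphism H → ℚ_l determined by T₀ ↦ 1 and T₁ ↦ l⁻¹ is surjective; consequently ℚ_l, with the H-module structure induced by this homomorphism, is a simple H-module, and it is not finitely generated as a ℤ_l-module. -/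
/-!
Since `ℚ_l = ℤ_l[l⁻¹]`, any `ℤ_l`-algebra map onto `ℚ_l` hitting `l⁻¹` is surjective, and a
division ring is simple over every ring surjecting onto it. If `ℚ_l` were finite over `ℤ_l` it
would be integral over it, and then `ℤ_l` would be a field, which a DVR is not.
-/

open Polynomial LaurentPolynomial

theorem isSimpleModule_compHom_of_surjective {R K : Type*} [Ring R] [DivisionRing K]
    (f : R →+* K) (hf : Function.Surjective f) :
    @IsSimpleModule R _ K _ (Module.compHom K f) := by
  let := Module.compHom K f
  have : RingHomSurjective f := ⟨hf⟩
  let id_f : K →ₛₗ[f] K := { AddMonoidHom.id K with map_smul' := fun _ _ => rfl }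
  exact (id_f.isSimpleModule_iff_of_bijective Function.bijective_id).mpr inferInstance

theorem not_finite_of_isFractionRing {A K : Type*} [CommRing A] [IsDomain A] [Field K]
    [Algebra A K] [IsFractionRing A K] (hA : ¬IsField A) : ¬Module.Finite A K := fun _ =>
  hA <| isField_of_isIntegral_of_isField (IsFractionRing.injective A K) (Field.toIsField K)

namespace Padic

variable {p : ℕ} [Fact p.Prime]

theorem exists_norm_mul_pow_le_one (q : ℚ_[p]) : ∃ n : ℕ, ‖q * (p : ℚ_[p]) ^ n‖ ≤ 1 := by
  obtain ⟨n, hn⟩ := pow_unbounded_of_one_lt ‖q‖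
    (by exact_mod_cast (Fact.out : p.Prime).one_lt : (1 : ℝ) < p)
  refine ⟨n, ?_⟩
  rw [norm_mul, norm_pow, norm_p, inv_pow, ← div_eq_mul_inv]
  exact div_le_one_of_le₀ hn.le (by positivity)

theorem exists_eq_mul_inv_pow (q : ℚ_[p]) :
    ∃ (a : ℤ_[p]) (n : ℕ), q = a * (p : ℚ_[p])⁻¹ ^ n := by
  obtain ⟨n, hn⟩ := exists_norm_mul_pow_le_one q
  have hp : (p : ℚ_[p]) ≠ 0 := by exact_mod_cast (Fact.out : p.Prime).ne_zero
  exact ⟨⟨_, hn⟩, n, by simp [hp]⟩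

theorem algHom_surjective_of_apply_eq_inv {A : Type*} [Semiring A] [Algebra ℤ_[p] A]
    (f : A →ₐ[ℤ_[p]] ℚ_[p]) {x : A} (hx : f x = (p : ℚ_[p])⁻¹) : Function.Surjective f := by
  intro q
  obtain ⟨a, n, rfl⟩ := exists_eq_mul_inv_pow q
  exact ⟨algebraMap ℤ_[p] A a * x ^ n, by simp [hx]⟩

end Padic

/-- Let `l` be a prime and let `H = ℤ_l[T₀, T₀⁻¹, T₁]`, realized as the polynomial ring in
`T₁ = X` over the Laurent polynomial ring `ℤ_l[T₀, T₀⁻¹]` (with `T₀ = C (T 1)`). There is a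
`ℤ_l`-algebra homomorphism `f : H → ℚ_l` with `f T₀ = 1` and `f T₁ = l⁻¹`; it is surjective;
`ℚ_l` with the `H`-module structure induced by `f` is a simple `H`-module; and `ℚ_l` is not
finitely generated as a `ℤ_l`-module. -/
theorem padic_simple_not_finite (l : ℕ) [Fact l.Prime] :
    ∃ f : Polynomial (LaurentPolynomial ℤ_[l]) →ₐ[ℤ_[l]] ℚ_[l],
      f (Polynomial.C (LaurentPolynomial.T 1)) = 1 ∧
      f Polynomial.X = ((l : ℚ_[l]))⁻¹ ∧
      Function.Surjective f ∧
      (@IsSimpleModule (Polynomial (LaurentPolynomial ℤ_[l])) _ ℚ_[l] _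
        (Module.compHom ℚ_[l] f.toRingHom)) ∧
      ¬ Module.Finite ℤ_[l] ℚ_[l] := by
  -- `ℤ_l[T₀, T₀⁻¹]` is the group algebra of `ℤ`; lifting the trivial character sends `T₀ ↦ 1`.
  set f := aevalTower (AddMonoidAlgebra.lift ℤ_[l] ℚ_[l] ℤ 1) (l : ℚ_[l])⁻¹
  have hfX : f X = (l : ℚ_[l])⁻¹ := aevalTower_X _ _
  have hf : Function.Surjective f := Padic.algHom_surjective_of_apply_eq_inv f hfX
  refine ⟨f, ?_, hfX, hf, isSimpleModule_compHom_of_surjective f.toRingHom hf,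
    not_finite_of_isFractionRing (IsDiscreteValuationRing.not_isField _)⟩
  simpa [f] using AddMonoidAlgebra.lift_single (1 : Multiplicative ℤ →* ℚ_[l]) 1 (1 : ℤ_[l])
end
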